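/- arXiv:0802.0776 — 4 statements merged into one kernel-verified Lean document; each statement's English description precedes it below -/
import Mathlib

section
/- Let A and B be n×n positive semidefinite Hermitian matrices with eigenvalues α₁ ≥ ... ≥ αₙ and β₁ ≥ ... ≥ βₙ respectively. Then log det(I + A·B) ≤ Σᵢ log(1 + αᵢ·βᵢ). -/
/-!
Write `A = R²` with `R` Hermitian, so that `det (1 + A B) = det (1 + R B R) = ∏ (1 + μᵢ)`, where
`μ₁ ≥ ⋯ ≥ μₙ ≥ 0` are the eigenvalues of `C = R B R`. If `V` has as orthonormal columns the
eigenvectors of `μ₁, …, μₖ`, then `μ₁ ⋯ μₖ = det (Vᴴ C V) = det (Wᴴ B W)` with `W = R V`, and the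
Cauchy–Binet formula bounds `det (Wᴴ B W) ≤ β₁ ⋯ βₖ · det (Wᴴ W) = β₁ ⋯ βₖ · det (Vᴴ A V)
≤ β₁ ⋯ βₖ · α₁ ⋯ αₖ` (Horn's inequality). Thus `μ` is weakly log-majorized by `(αᵢ βᵢ)`, and since
`t ↦ log (1 + eᵗ)` is convex and increasing, Abel summation against its decreasing slopes
`μᵢ / (1 + μᵢ)` gives `∑ log (1 + μᵢ) ≤ ∑ log (1 + αᵢ βᵢ)`.
-/

open Matrix ComplexOrder Finset

theorem Matrix.det_mul_eq_sum_det_submatrix_mul_prod {R ι : Type*} [CommRing R] [Fintype ι]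
    {k : ℕ} (A : Matrix (Fin k) ι R) (B : Matrix ι (Fin k) R) :
    (A * B).det = ∑ f : Fin k → ι, (A.submatrix id f).det * ∏ i, B (f i) i := by
  have hprod (σ : Equiv.Perm (Fin k)) :
      ∏ i, (A * B) (σ i) i = ∑ f : Fin k → ι, ∏ i, A (σ i) (f i) * B (f i) i := by
    simp_rw [mul_apply]
    rw [prod_univ_sum, Fintype.piFinset_univ]
  simp_rw [det_apply', hprod, mul_sum, sum_mul]
  rw [sum_comm]
  refine sum_congr rfl fun f _ => sum_congr rfl fun σ _ => ?_
  simp [prod_mul_distrib, mul_assoc]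

section CauchyBinet

variable {ι : Type*} [LinearOrder ι] {k : ℕ}

theorem Finset.prod_orderEmbOfFin {M : Type*} [CommMonoid M] (S : Finset ι) (hS : S.card = k)
    (f : ι → M) : ∏ j, f (S.orderEmbOfFin hS j) = ∏ i ∈ S, f i := by
  conv_rhs => rw [← image_orderEmbOfFin_univ S hS]
  rw [prod_image fun _ _ _ _ h => (S.orderEmbOfFin hS).injective h]

noncomputable def Finset.cardEqProdPermEquivInjective :
    {S : Finset ι // S.card = k} × Equiv.Perm (Fin k) ≃
      {f : Fin k → ι // Function.Injective f} :=
  Equiv.ofBijective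
    (fun p => ⟨p.1.1.orderEmbOfFin p.1.2 ∘ p.2,
      (p.1.1.orderEmbOfFin p.1.2).injective.comp p.2.injective⟩) <| by
    constructor
    · rintro ⟨⟨S, hS⟩, σ⟩ ⟨⟨T, hT⟩, τ⟩ h
      have h' : S.orderEmbOfFin hS ∘ σ = T.orderEmbOfFin hT ∘ τ := congrArg Subtype.val h
      have image_eq (U : Finset ι) (hU : U.card = k) (π : Equiv.Perm (Fin k)) :
          univ.image (U.orderEmbOfFin hU ∘ π) = U := by
        rw [← image_image, image_univ_equiv, image_orderEmbOfFin_univ]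
      obtain rfl : S = T := by rw [← image_eq S hS σ, ← image_eq T hT τ, h']
      obtain rfl : σ = τ := Equiv.ext fun i => (S.orderEmbOfFin hS).injective (congrFun h' i)
      rfl
    · rintro ⟨f, hf⟩
      have hS : (univ.image f).card = k := by simp [card_image_of_injective _ hf]
      let g (i : Fin k) : Fin k := ((univ.image f).orderIsoOfFin hS).symm ⟨f i, by simp⟩
      have hg : Function.Injective g := fun i j hij => hf <| by
        simpa [g] using congrArg (fun z => ((univ.image f).orderIsoOfFin hS z : ι)) hij
      refine ⟨⟨⟨_, hS⟩, Equiv.ofBijective g hg.bijective_of_finite⟩, ?_⟩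
      ext i : 2
      simp [g, ← coe_orderIsoOfFin_apply]

@[simp]
theorem Finset.coe_cardEqProdPermEquivInjective_apply
    (p : {S : Finset ι // S.card = k} × Equiv.Perm (Fin k)) :
    (cardEqProdPermEquivInjective p : Fin k → ι) = p.1.1.orderEmbOfFin p.1.2 ∘ p.2 :=
  rfl

variable {R : Type*} [CommRing R] [Fintype ι]

/-- **Cauchy–Binet formula**. -/
theorem Matrix.det_mul_eq_sum_det_mul_det (A : Matrix (Fin k) ι R) (B : Matrix ι (Fin k) R) :
    (A * B).det = ∑ S : {S : Finset ι // S.card = k},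
      (A.submatrix id (S.1.orderEmbOfFin S.2)).det *
        (B.submatrix (S.1.orderEmbOfFin S.2) id).det := by
  classical
  have hnoninj (f : Fin k → ι) (hf : ¬ Function.Injective f) :
      (A.submatrix id f).det * ∏ i, B (f i) i = 0 := by
    obtain ⟨i, j, hij, hne⟩ := Function.not_injective_iff.1 hf
    rw [det_zero_of_column_eq hne fun _ => by simp [hij], zero_mul]
  rw [det_mul_eq_sum_det_submatrix_mul_prod, ← sum_filter_of_ne fun f _ h => not_not.1
      (mt (hnoninj f) h), sum_subtype _ (p := Function.Injective) fun f => by simp,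
    ← Equiv.sum_comp cardEqProdPermEquivInjective, Fintype.sum_prod_type]
  refine sum_congr rfl fun S _ => ?_
  rw [det_apply' (B.submatrix _ id), mul_sum]
  refine sum_congr rfl fun σ _ => ?_
  have hperm : A.submatrix id (S.1.orderEmbOfFin S.2 ∘ σ) =
      (A.submatrix id (S.1.orderEmbOfFin S.2)).submatrix id σ := rfl
  simp only [coe_cardEqProdPermEquivInjective_apply, hperm, det_permute', submatrix_apply, id,
    Function.comp_apply]
  ring

end CauchyBinet

section Spectral

variable {ι : Type*} [Fintype ι] [LinearOrder ι] {k : ℕ}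

theorem Matrix.re_det_conjTranspose_mul_diagonal_mul (M : Matrix ι (Fin k) ℂ) (d : ι → ℝ) :
    (Mᴴ * diagonal (fun i => (d i : ℂ)) * M).det.re =
      ∑ S : {S : Finset ι // S.card = k},
        (∏ i ∈ S.1, d i) * Complex.normSq (M.submatrix (S.1.orderEmbOfFin S.2) id).det := by
  rw [det_mul_eq_sum_det_mul_det, Complex.re_sum]
  refine sum_congr rfl fun S _ => ?_
  set e := S.1.orderEmbOfFin S.2
  have hsub : (Mᴴ * diagonal (fun i => (d i : ℂ))).submatrix id e =
      (M.submatrix e id)ᴴ * diagonal (fun j => (d (e j) : ℂ)) := by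
    ext i j
    simp
  rw [hsub, det_mul, det_conjTranspose, det_diagonal, ← Complex.ofReal_prod, prod_orderEmbOfFin,
    mul_comm (star _), mul_assoc, Complex.star_def, ← Complex.normSq_eq_conj_mul_self,
    ← Complex.ofReal_mul, Complex.ofReal_re]

theorem Matrix.re_det_conjTranspose_mul_diagonal_mul_le (M : Matrix ι (Fin k) ℂ) (d : ι → ℝ)
    {c : ℝ} (hc : ∀ S : Finset ι, S.card = k → ∏ i ∈ S, d i ≤ c) :
    (Mᴴ * diagonal (fun i => (d i : ℂ)) * M).det.re ≤ c * (Mᴴ * M).det.re := by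
  have hgram := re_det_conjTranspose_mul_diagonal_mul M fun _ => 1
  simp only [Complex.ofReal_one, diagonal_one, Matrix.mul_one, prod_const_one, one_mul] at hgram
  rw [hgram, re_det_conjTranspose_mul_diagonal_mul, mul_sum]
  exact sum_le_sum fun S _ => mul_le_mul_of_nonneg_right (hc S.1 S.2) (Complex.normSq_nonneg _)

variable {E : Matrix ι ι ℂ}

theorem Matrix.IsHermitian.re_det_conjTranspose_mul_mul_le (hE : E.IsHermitian)
    (V : Matrix ι (Fin k) ℂ) {c : ℝ}
    (hc : ∀ S : Finset ι, S.card = k → ∏ i ∈ S, hE.eigenvalues i ≤ c) :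
    (Vᴴ * E * V).det.re ≤ c * (Vᴴ * V).det.re := by
  set U : Matrix ι ι ℂ := ↑hE.eigenvectorUnitary
  have hEU : E = U * diagonal (fun i => (hE.eigenvalues i : ℂ)) * Uᴴ := hE.spectral_theorem
  have hUU : U * Uᴴ = 1 := Unitary.mul_star_self_of_mem hE.eigenvectorUnitary.2
  have hconj : (Vᴴ * E * V : Matrix (Fin k) (Fin k) ℂ) =
      (Uᴴ * V)ᴴ * diagonal (fun i => (hE.eigenvalues i : ℂ)) * (Uᴴ * V) := by
    conv_lhs => rw [hEU]
    simp only [conjTranspose_mul, conjTranspose_conjTranspose, Matrix.mul_assoc]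
  have hgram : (Vᴴ * V : Matrix (Fin k) (Fin k) ℂ) = (Uᴴ * V)ᴴ * (Uᴴ * V) := by
    rw [conjTranspose_mul, conjTranspose_conjTranspose, Matrix.mul_assoc, ← Matrix.mul_assoc U,
      hUU, Matrix.one_mul]
  rw [hconj, hgram]
  exact re_det_conjTranspose_mul_diagonal_mul_le _ _ hc

theorem Matrix.IsHermitian.exists_conjTranspose_mul_mul_eq_diagonal (hE : E.IsHermitian)
    {g : Fin k → ι} (hg : Function.Injective g) :
    ∃ V : Matrix ι (Fin k) ℂ,
      Vᴴ * V = 1 ∧ Vᴴ * E * V = diagonal (fun j => (hE.eigenvalues (g j) : ℂ)) := by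
  set U : Matrix ι ι ℂ := ↑hE.eigenvectorUnitary
  have hUU : Uᴴ * U = 1 := Unitary.star_mul_self_of_mem hE.eigenvectorUnitary.2
  have hdiag : Uᴴ * E * U = diagonal (fun i => (hE.eigenvalues i : ℂ)) := by
    have h := hE.conjStarAlgAut_star_eigenvectorUnitary
    rwa [Unitary.conjStarAlgAut_star_apply] at h
  refine ⟨U.submatrix id g, ?_, ?_⟩
  · rw [conjTranspose_submatrix, ← submatrix_mul _ _ _ _ _ Function.bijective_id, hUU,
      submatrix_one _ hg]
  · change _ = diagonal ((fun i => (hE.eigenvalues i : ℂ)) ∘ g)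
    rw [conjTranspose_submatrix, ← submatrix_diagonal _ _ hg, ← hdiag,
      submatrix_mul _ _ _ id _ Function.bijective_id,
      submatrix_mul _ _ _ id _ Function.bijective_id, submatrix_id_id]

end Spectral

theorem Matrix.IsHermitian.det_one_add {𝕜 ι : Type*} [RCLike 𝕜] [Fintype ι] [DecidableEq ι]
    {E : Matrix ι ι 𝕜} (hE : E.IsHermitian) :
    (1 + E).det = ((∏ i, (1 + hE.eigenvalues i) : ℝ) : 𝕜) := by
  set U : Matrix ι ι 𝕜 := ↑hE.eigenvectorUnitary
  have hEU : 1 + E = U * diagonal (fun i => 1 + (hE.eigenvalues i : 𝕜)) * star U := by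
    conv_lhs => rw [hE.spectral_theorem]
    rw [← map_one (Unitary.conjStarAlgAut 𝕜 _ hE.eigenvectorUnitary), ← map_add,
      Unitary.conjStarAlgAut_apply, ← diagonal_one, diagonal_add]
    rfl
  rw [hEU, det_conj_of_mul_eq_one (Unitary.mul_star_self_of_mem hE.eigenvectorUnitary.2)
    (Unitary.star_mul_self_of_mem hE.eigenvectorUnitary.2), det_diagonal]
  push_cast
  rfl

open scoped MatrixOrder in
theorem Matrix.PosSemidef.exists_isHermitian_mul_self_eq {𝕜 ι : Type*} [RCLike 𝕜] [Fintype ι]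
    [DecidableEq ι] {A : Matrix ι ι 𝕜} (hA : A.PosSemidef) :
    ∃ R : Matrix ι ι 𝕜, R.IsHermitian ∧ R * R = A :=
  ⟨CFC.sqrt A, (CFC.sqrt_nonneg A).posSemidef.1, CFC.sqrt_mul_sqrt_self A hA.nonneg⟩

section OrderedEigenvalues

variable {n k : ℕ}

theorem Fin.exists_perm_antitone_comp (f : Fin n → ℝ) :
    ∃ σ : Equiv.Perm (Fin n), Antitone (f ∘ σ) :=
  ⟨Tuple.sort (OrderDual.toDual ∘ f), Tuple.monotone_sort (OrderDual.toDual ∘ f)⟩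

theorem Fin.val_le_val_of_strictMono {f : Fin k → Fin n} (hf : StrictMono f) (j : Fin k) :
    (j : ℕ) ≤ f j :=
  calc (j : ℕ) = #((Iio j).image f) := by rw [card_image_of_injective _ hf.injective, card_Iio]
    _ ≤ #(Iio (f j)) := card_le_card fun x hx => by
        obtain ⟨i, hi, rfl⟩ := mem_image.1 hx
        exact mem_Iio.2 (hf (mem_Iio.1 hi))
    _ = f j := card_Iio _

theorem Antitone.prod_le_prod_castLE {x : Fin n → ℝ} (hx : Antitone x) (hx0 : 0 ≤ x)
    {S : Finset (Fin n)} (hS : S.card = k) (hkn : k ≤ n) :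
    ∏ i ∈ S, x i ≤ ∏ j : Fin k, x (Fin.castLE hkn j) := by
  rw [← prod_orderEmbOfFin S hS]
  exact prod_le_prod (fun _ _ => hx0 _) fun j _ =>
    hx (Fin.val_le_val_of_strictMono (S.orderEmbOfFin hS).strictMono j)

theorem Antitone.prod_comp_le_prod_castLE {x e : Fin n → ℝ} (hx : Antitone x) (he0 : 0 ≤ e)
    {σ : Equiv.Perm (Fin n)} (hσ : ∀ i, x i = e (σ i)) {S : Finset (Fin n)} (hS : S.card = k)
    (hkn : k ≤ n) : ∏ i ∈ S, e i ≤ ∏ j : Fin k, x (Fin.castLE hkn j) := by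
  have hx0 : 0 ≤ x := fun i => (hσ i).symm ▸ he0 (σ i)
  calc ∏ i ∈ S, e i = ∏ i ∈ S.map σ.symm.toEmbedding, x i := by simp [hσ]
    _ ≤ _ := hx.prod_le_prod_castLE hx0 (by simpa using hS) hkn

theorem Matrix.PosSemidef.re_det_conjTranspose_mul_mul_le_prod_castLE
    {E : Matrix (Fin n) (Fin n) ℂ} (hE : E.PosSemidef) {x : Fin n → ℝ} (hx : Antitone x)
    {σ : Equiv.Perm (Fin n)} (hσ : ∀ i, x i = hE.1.eigenvalues (σ i)) (hkn : k ≤ n) (V : Matrix (Fin n) (Fin k) ℂ) :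
    (Vᴴ * E * V).det.re ≤ (∏ j : Fin k, x (Fin.castLE hkn j)) * (Vᴴ * V).det.re :=
  hE.1.re_det_conjTranspose_mul_mul_le V fun _ hS =>
    hx.prod_comp_le_prod_castLE hE.eigenvalues_nonneg hσ hS hkn

theorem Matrix.IsHermitian.exists_re_det_eq_prod_castLE {C : Matrix (Fin n) (Fin n) ℂ}
    (hC : C.IsHermitian) {x : Fin n → ℝ} {σ : Equiv.Perm (Fin n)}
    (hσ : ∀ i, x i = hC.eigenvalues (σ i)) (hkn : k ≤ n) :
    ∃ V : Matrix (Fin n) (Fin k) ℂ,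
      Vᴴ * V = 1 ∧ (Vᴴ * C * V).det.re = ∏ j : Fin k, x (Fin.castLE hkn j) := by
  obtain ⟨V, hVV, hVCV⟩ := hC.exists_conjTranspose_mul_mul_eq_diagonal
    (σ.injective.comp (Fin.castLE_injective hkn))
  refine ⟨V, hVV, ?_⟩
  rw [hVCV, det_diagonal, ← Complex.ofReal_prod, Complex.ofReal_re]
  simp [hσ]

/-- **Horn's inequality** for `R B R`, whose eigenvalues are those of `A B`. -/
theorem Matrix.PosSemidef.prod_castLE_le_of_mul_self_eq {A B R : Matrix (Fin n) (Fin n) ℂ}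
    (hA : A.PosSemidef) (hB : B.PosSemidef) (hR : R.IsHermitian) (hRA : R * R = A)
    (hC : (R * B * R).IsHermitian) {α β ν : Fin n → ℝ} (hα : Antitone α) (hβ : Antitone β)
    {σα σβ σν : Equiv.Perm (Fin n)} (hσα : ∀ i, α i = hA.1.eigenvalues (σα i))
    (hσβ : ∀ i, β i = hB.1.eigenvalues (σβ i)) (hσν : ∀ i, ν i = hC.eigenvalues (σν i))
    (hkn : k ≤ n) :
    ∏ j : Fin k, ν (Fin.castLE hkn j) ≤
      (∏ j : Fin k, α (Fin.castLE hkn j)) * ∏ j : Fin k, β (Fin.castLE hkn j) := by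
  obtain ⟨V, hVV, hVCV⟩ := hC.exists_re_det_eq_prod_castLE hσν hkn
  have hcompress : (R * V)ᴴ * (R * V) = Vᴴ * A * V := by
    rw [conjTranspose_mul, hR.eq, ← hRA]; simp only [Matrix.mul_assoc]
  have hβ0 : 0 ≤ ∏ j : Fin k, β (Fin.castLE hkn j) :=
    prod_nonneg fun j _ => (hσβ _).symm ▸ hB.eigenvalues_nonneg _
  calc ∏ j : Fin k, ν (Fin.castLE hkn j) = ((R * V)ᴴ * B * (R * V)).det.re := by
        rw [← hVCV, conjTranspose_mul, hR.eq]; simp only [Matrix.mul_assoc]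
    _ ≤ (∏ j : Fin k, β (Fin.castLE hkn j)) * (Vᴴ * A * V).det.re := by
        rw [← hcompress]; exact hB.re_det_conjTranspose_mul_mul_le_prod_castLE hβ hσβ hkn _
    _ ≤ (∏ j : Fin k, β (Fin.castLE hkn j)) * (∏ j : Fin k, α (Fin.castLE hkn j)) := by
        refine mul_le_mul_of_nonneg_left ?_ hβ0
        simpa [hVV] using hA.re_det_conjTranspose_mul_mul_le_prod_castLE hα hσα hkn V
    _ = _ := mul_comm _ _

end OrderedEigenvalues

theorem Real.log_one_add_sub_log_one_add_le {x y : ℝ} (hx : 0 ≤ x) (hy : 0 ≤ y)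
    (hxy : 0 < x → 0 < y) :
    log (1 + x) - log (1 + y) ≤ x / (1 + x) * (log x - log y) := by
  rcases hx.eq_or_lt with rfl | hx
  · simpa using log_nonneg (by linarith : 1 ≤ 1 + y)
  have hy := hxy hx
  have hconc := strictConcaveOn_log_Ioi.concaveOn.2 (Set.mem_Ioi.2 one_pos)
    (Set.mem_Ioi.2 (div_pos hy hx)) (by positivity : 0 ≤ 1 / (1 + x))
    (by positivity : 0 ≤ x / (1 + x)) (by field_simp)
  have hmix : (1 / (1 + x)) • (1 : ℝ) + (x / (1 + x)) • (y / x) = (1 + y) / (1 + x) := by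
    simp only [smul_eq_mul]; field_simp
  rw [hmix, log_div hy.ne' hx.ne', log_div (by positivity) (by positivity)] at hconc
  simp only [smul_eq_mul, log_one, mul_zero, zero_add] at hconc
  linarith

theorem Finset.sum_range_mul_nonpos_of_antitoneOn {g d : ℕ → ℝ} {n : ℕ}
    (hg : AntitoneOn g (Set.Iio n)) (hg0 : ∀ i < n, 0 ≤ g i)
    (hd : ∀ k < n, 0 < g k → ∑ i ∈ range (k + 1), d i ≤ 0) :
    ∑ i ∈ range n, g i * d i ≤ 0 := by
  rcases Nat.eq_zero_or_pos n with rfl | hn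
  · simp
  have hpartial : ∀ k < n, g k * ∑ i ∈ range (k + 1), d i ≤ 0 := fun k hk =>
    (hg0 k hk).eq_or_lt.elim (fun h => by simp [← h]) fun h =>
      mul_nonpos_of_nonneg_of_nonpos h.le (hd k hk h)
  have hparts := sum_range_by_parts g d n
  simp only [smul_eq_mul] at hparts
  rw [hparts]
  have hlast := hpartial (n - 1) (by omega)
  rw [Nat.sub_add_cancel hn] at hlast
  have hsteps : 0 ≤ ∑ i ∈ range (n - 1), (g (i + 1) - g i) * ∑ j ∈ range (i + 1), d j := by
    refine sum_nonneg fun i hi => ?_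
    have hi : i + 1 < n := by rw [mem_range] at hi; omega
    have hmono : g (i + 1) ≤ g i := hg (by simp; omega) (by simpa using hi) (by omega)
    rcases (hg0 i (by omega)).eq_or_lt with h | h
    · have : g (i + 1) = 0 := le_antisymm (h ▸ hmono) (hg0 _ hi)
      simp [this, ← h]
    · exact mul_nonneg_of_nonpos_of_nonpos (by linarith) (hd i (by omega) h)
  linarith

theorem Finset.sum_range_log_one_add_le_of_prod_range_le {x y : ℕ → ℝ} {n : ℕ}
    (hx : AntitoneOn x (Set.Iio n)) (hx0 : ∀ i < n, 0 ≤ x i) (hy0 : ∀ i < n, 0 ≤ y i)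
    (h : ∀ k ≤ n, ∏ i ∈ range k, x i ≤ ∏ i ∈ range k, y i) :
    ∑ i ∈ range n, Real.log (1 + x i) ≤ ∑ i ∈ range n, Real.log (1 + y i) := by
  have hxpos : ∀ k < n, 0 < x k → ∀ i ∈ range (k + 1), 0 < x i := fun k hk hxk i hi => by
    rw [mem_range] at hi
    exact hxk.trans_le (hx (by simp; omega) (by simpa using hk) (by omega))
  have hypos : ∀ k < n, 0 < x k → ∀ i ∈ range (k + 1), 0 < y i := by
    intro k hk hxk i hi
    have hprod : 0 < ∏ j ∈ range (k + 1), y j := (prod_pos (hxpos k hk hxk)).trans_le (h _ hk)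
    refine (hy0 i (by rw [mem_range] at hi; omega)).lt_of_ne fun hyi => hprod.ne' ?_
    exact prod_eq_zero hi hyi.symm
  rw [← sub_nonpos, ← sum_sub_distrib]
  refine (sum_le_sum fun i hi => Real.log_one_add_sub_log_one_add_le (hx0 i (mem_range.1 hi))
    (hy0 i (mem_range.1 hi))
    fun hxi => hypos i (mem_range.1 hi) hxi i (self_mem_range_succ i)).trans ?_
  refine sum_range_mul_nonpos_of_antitoneOn ?_ (fun i hi => by have := hx0 i hi; positivity) ?_
  · intro i hi j hj hij
    have := hx0 i hi
    have := hx0 j hj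
    have := hx hi hj hij
    rw [div_le_div_iff₀ (by positivity) (by positivity)]
    nlinarith
  · intro k hk hg
    have hxk : 0 < x k := (hx0 k hk).lt_of_ne fun h0 => by simp [← h0] at hg
    rw [sum_sub_distrib, ← Real.log_prod fun i hi => (hxpos k hk hxk i hi).ne',
      ← Real.log_prod fun i hi => (hypos k hk hxk i hi).ne', sub_nonpos]
    exact Real.log_le_log (prod_pos (hxpos k hk hxk)) (h _ hk)

theorem Fin.sum_log_one_add_le_of_prod_castLE_le {n : ℕ} {x y : Fin n → ℝ} (hx : Antitone x)
    (hx0 : 0 ≤ x) (hy0 : 0 ≤ y)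
    (h : ∀ k (hk : k ≤ n), ∏ j : Fin k, x (Fin.castLE hk j) ≤ ∏ j : Fin k, y (Fin.castLE hk j)) :
    ∑ i, Real.log (1 + x i) ≤ ∑ i, Real.log (1 + y i) := by
  let extend (z : Fin n → ℝ) (i : ℕ) : ℝ := if hi : i < n then z ⟨i, hi⟩ else 0
  have extend_of_lt (z : Fin n → ℝ) {i : ℕ} (hi : i < n) : extend z i = z ⟨i, hi⟩ := dif_pos hi
  have prod_extend (z : Fin n → ℝ) (k : ℕ) (hk : k ≤ n) :
      ∏ i ∈ range k, extend z i = ∏ j : Fin k, z (Fin.castLE hk j) := by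
    rw [← Fin.prod_univ_eq_prod_range]
    exact prod_congr rfl fun j _ => extend_of_lt z _
  have sum_extend (z : Fin n → ℝ) :
      ∑ i, Real.log (1 + z i) = ∑ i ∈ range n, Real.log (1 + extend z i) := by
    rw [← Fin.sum_univ_eq_sum_range]
    exact sum_congr rfl fun i _ => by rw [extend_of_lt z i.2]
  rw [sum_extend, sum_extend]
  refine sum_range_log_one_add_le_of_prod_range_le ?_ (fun i hi => ?_) (fun i hi => ?_)
    fun k hk => by simpa only [prod_extend _ k hk] using h k hk
  · intro i hi j hj hij
    rw [extend_of_lt x hi, extend_of_lt x hj]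
    exact hx hij
  · rw [extend_of_lt x hi]; exact hx0 _
  · rw [extend_of_lt y hi]; exact hy0 _

/-- Lemma 2: for positive semidefinite Hermitian `A`, `B` with decreasingly ordered
eigenvalues `α`, `β`, one has `log det(I + A·B) ≤ Σᵢ log(1 + αᵢ·βᵢ)`. -/
theorem logdet_le_sum_log_ordered_eigenvalues {n : ℕ}
    (A B : Matrix (Fin n) (Fin n) ℂ) (hA : A.PosSemidef) (hB : B.PosSemidef)
    (α β : Fin n → ℝ) (hαanti : Antitone α) (hβanti : Antitone β)
    (hα : ∃ σ : Equiv.Perm (Fin n), ∀ i, α i = hA.1.eigenvalues (σ i))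
    (hβ : ∃ σ : Equiv.Perm (Fin n), ∀ i, β i = hB.1.eigenvalues (σ i)) :
    Real.log ((1 + A * B).det.re) ≤ ∑ i, Real.log (1 + α i * β i) := by
  obtain ⟨σα, hσα⟩ := hα
  obtain ⟨σβ, hσβ⟩ := hβ
  obtain ⟨R, hR, hRA⟩ := hA.exists_isHermitian_mul_self_eq
  have hC : (R * B * R).PosSemidef := by simpa [hR.eq] using hB.conjTranspose_mul_mul_same R
  obtain ⟨σν, hν⟩ := Fin.exists_perm_antitone_comp hC.1.eigenvalues
  have hdet : (1 + A * B).det.re = ∏ i, (1 + hC.1.eigenvalues i) := by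
    rw [← hRA, Matrix.mul_assoc, det_one_add_mul_comm, hC.1.det_one_add]
    exact Complex.ofReal_re _
  have hμ0 := hC.eigenvalues_nonneg
  rw [hdet, Real.log_prod fun i _ => by linarith [hμ0 i], ← Equiv.sum_comp σν]
  refine Fin.sum_log_one_add_le_of_prod_castLE_le hν (fun i => hμ0 _)
    (fun i => mul_nonneg ((hσα i).symm ▸ hA.eigenvalues_nonneg _)
      ((hσβ i).symm ▸ hB.eigenvalues_nonneg _)) fun k hk => ?_
  rw [prod_mul_distrib]
  exact hA.prod_castLE_le_of_mul_self_eq hB hR hRA hC.1 hαanti hβanti hσα hσβ (fun _ => rfl) hk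
end

section
/- Let X, Y₀, Y₁,...,Y_N, Ŷ₁,...,Ŷ_N be jointly distributed random variables such that each Ŷₙ is conditionally independent of everything else given Yₙ. If I(Y_{1:N}; Ŷ_{1:N} | Y₀) ≤ R, then I(X; Y₀, Ŷ_{1:N}) ≤ I(X; Y₀) + R. -/
open Finset

/-- Distribution of a random variable `X` on a finite sample space with pmf `μ`. -/
noncomputable def pdist {Ω A : Type*} [Fintype Ω] [DecidableEq A]
    (μ : Ω → ℝ) (X : Ω → A) : A → ℝ :=
  fun a => ∑ ω, if X ω = a then μ ω else 0

/-- Shannon entropy of a random variable. -/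
noncomputable def entRV {Ω A : Type*} [Fintype Ω] [Fintype A] [DecidableEq A]
    (μ : Ω → ℝ) (X : Ω → A) : ℝ :=
  -∑ a, pdist μ X a * Real.log (pdist μ X a)

/-- Mutual information `I(X;Y)`. -/
noncomputable def mi {Ω A B : Type*} [Fintype Ω] [Fintype A] [Fintype B]
    [DecidableEq A] [DecidableEq B] (μ : Ω → ℝ) (X : Ω → A) (Y : Ω → B) : ℝ :=
  entRV μ X + entRV μ Y - entRV μ (fun ω => (X ω, Y ω))

/-- Conditional mutual information `I(X;Y|Z)`. -/
noncomputable def cmi {Ω A B C : Type*} [Fintype Ω] [Fintype A] [Fintype B] [Fintype C]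
    [DecidableEq A] [DecidableEq B] [DecidableEq C]
    (μ : Ω → ℝ) (X : Ω → A) (Y : Ω → B) (Z : Ω → C) : ℝ :=
  entRV μ (fun ω => (X ω, Z ω)) + entRV μ (fun ω => (Y ω, Z ω))
    - entRV μ (fun ω => (X ω, Y ω, Z ω)) - entRV μ Z


instance (priority := 2000) prodDecEq4 {A B C D : Type*}
    [DecidableEq A] [DecidableEq B] [DecidableEq C] [DecidableEq D] :
    DecidableEq (A × B × C × D) := instDecidableEqProd

/-!
By the chain rule, `I(X; Y₀, Ŷ) = I(X; Y₀) + I(X; Ŷ | Y₀)`. Since each `Ŷₙ` depends on the rest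
only through `Yₙ`, removing the `Ŷₙ` one at a time factors the joint law as
`p(x, y₀, y, ŷ) ∏ₙ p(yₙ) = p(x, y₀, y) ∏ₙ p(yₙ, ŷₙ)`, so `X – (Y, Y₀) – Ŷ` is a Markov chain and
`I(X; Ŷ | Y, Y₀) = 0`. The conditional data-processing inequality then gives
`I(X; Ŷ | Y₀) ≤ I(Y; Ŷ | Y₀) ≤ R`.
-/

section Distribution

variable {Ω A B : Type*} [Fintype Ω] [DecidableEq A] [DecidableEq B] {μ : Ω → ℝ}

theorem pdist_nonneg (hμ : ∀ ω, 0 ≤ μ ω) (T : Ω → A) (a : A) : 0 ≤ pdist μ T a :=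
  sum_nonneg fun ω _ => by split_ifs <;> simp [hμ ω]

theorem pdist_mono (hμ : ∀ ω, 0 ≤ μ ω) {T : Ω → A} {U : Ω → B} {a : A} {b : B}
    (h : ∀ ω, T ω = a → U ω = b) : pdist μ T a ≤ pdist μ U b :=
  sum_le_sum fun ω _ => by
    by_cases hT : T ω = a
    · simp [hT, h ω hT]
    · simp only [hT, if_false]
      split_ifs <;> simp [hμ ω]

theorem pdist_congr {T : Ω → A} {U : Ω → B} {a : A} {b : B} (h : ∀ ω, T ω = a ↔ U ω = b) :
    pdist μ T a = pdist μ U b :=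
  sum_congr rfl fun ω _ => if_congr (h ω) rfl rfl

theorem le_pdist_self (hμ : ∀ ω, 0 ≤ μ ω) (T : Ω → A) (ω : Ω) : μ ω ≤ pdist μ T (T ω) := by
  simpa [pdist] using single_le_sum (f := fun ω' => if T ω' = T ω then μ ω' else 0)
    (fun ω' _ => by split_ifs <;> simp [hμ ω']) (mem_univ ω)

theorem pdist_comp_of_injective {g : A → B} (hg : Function.Injective g) (T : Ω → A) (a : A) :
    pdist μ (fun ω => g (T ω)) (g a) = pdist μ T a := by
  simp only [pdist, hg.eq_iff]

theorem sum_pdist_mul [Fintype A] (T : Ω → A) (f : A → ℝ) :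
    ∑ a, pdist μ T a * f a = ∑ ω, μ ω * f (T ω) := by
  simp only [pdist, sum_mul, ite_mul, zero_mul]
  rw [sum_comm]
  simp

theorem sum_pdist_fst [Fintype A] (U : Ω → A) (V : Ω → B) (b : B) :
    ∑ a, pdist μ (fun ω => (U ω, V ω)) (a, b) = pdist μ V b := by
  simp only [pdist, Prod.mk.injEq, ite_and]
  rw [sum_comm]
  simp

end Distribution

section Entropy

variable {Ω A B C : Type*} [Fintype Ω] [Fintype A] [Fintype B] [Fintype C]
  [DecidableEq A] [DecidableEq B] [DecidableEq C] {μ : Ω → ℝ}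

theorem entRV_eq_sum (T : Ω → A) :
    entRV μ T = -∑ ω, μ ω * Real.log (pdist μ T (T ω)) := by
  rw [entRV, sum_pdist_mul T fun a => Real.log (pdist μ T a)]

theorem entRV_comp_of_injective {g : A → B} (hg : Function.Injective g) (T : Ω → A) :
    entRV μ (fun ω => g (T ω)) = entRV μ T := by
  simp only [entRV_eq_sum, pdist_comp_of_injective hg]

theorem mi_prod_eq_mi_add_cmi (X : Ω → A) (Z : Ω → B) (W : Ω → C) :
    mi μ X (fun ω => (Z ω, W ω)) = mi μ X Z + cmi μ X W Z := by
  have hZW : entRV μ (fun ω => (Z ω, W ω)) = entRV μ (fun ω => (W ω, Z ω)) :=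
    entRV_comp_of_injective Prod.swap_injective (fun ω => (W ω, Z ω))
  have hXZW : entRV μ (fun ω => (X ω, Z ω, W ω)) = entRV μ (fun ω => (X ω, W ω, Z ω)) :=
    entRV_comp_of_injective (g := fun p : A × C × B => (p.1, p.2.2, p.2.1))
      (by rintro ⟨⟩ ⟨⟩ h; simp_all [Prod.ext_iff]) (fun ω => (X ω, W ω, Z ω))
  simp only [mi, cmi]
  linarith

end Entropy

section ConditionalMutualInformation

variable {Ω A B C : Type*} [Fintype Ω] [Fintype A] [Fintype B] [Fintype C]
  [DecidableEq A] [DecidableEq B] [DecidableEq C] {μ : Ω → ℝ}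
  (U : Ω → A) (V : Ω → B) (W : Ω → C)

theorem cmi_eq_sum_mul_log (hμ : ∀ ω, 0 ≤ μ ω) :
    cmi μ U V W = ∑ ω, μ ω * Real.log
      (pdist μ (fun ω => (U ω, V ω, W ω)) (U ω, V ω, W ω) * pdist μ W (W ω) /
        (pdist μ (fun ω => (U ω, W ω)) (U ω, W ω) * pdist μ (fun ω => (V ω, W ω)) (V ω, W ω))) := by
  have hterm : ∀ ω, μ ω * Real.log
      (pdist μ (fun ω => (U ω, V ω, W ω)) (U ω, V ω, W ω) * pdist μ W (W ω) /
        (pdist μ (fun ω => (U ω, W ω)) (U ω, W ω) * pdist μ (fun ω => (V ω, W ω)) (V ω, W ω)))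
      = μ ω * Real.log (pdist μ (fun ω => (U ω, V ω, W ω)) (U ω, V ω, W ω))
        + μ ω * Real.log (pdist μ W (W ω))
        - μ ω * Real.log (pdist μ (fun ω => (U ω, W ω)) (U ω, W ω))
        - μ ω * Real.log (pdist μ (fun ω => (V ω, W ω)) (V ω, W ω)) := by
    intro ω
    rcases (hμ ω).eq_or_lt with h0 | hpos
    · simp [← h0]
    have h3 := (hpos.trans_le (le_pdist_self hμ (fun ω => (U ω, V ω, W ω)) ω)).ne'
    have hW := (hpos.trans_le (le_pdist_self hμ W ω)).ne'
    have hUW := (hpos.trans_le (le_pdist_self hμ (fun ω => (U ω, W ω)) ω)).ne'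
    have hVW := (hpos.trans_le (le_pdist_self hμ (fun ω => (V ω, W ω)) ω)).ne'
    rw [Real.log_div (mul_ne_zero h3 hW) (mul_ne_zero hUW hVW), Real.log_mul h3 hW,
      Real.log_mul hUW hVW]
    ring
  simp only [hterm, sum_add_distrib, sum_sub_distrib, cmi, entRV_eq_sum]
  ring

theorem cmi_eq_zero (hμ : ∀ ω, 0 ≤ μ ω)
    (h : ∀ x y z, pdist μ (fun ω => (U ω, V ω, W ω)) (x, y, z) * pdist μ W z =
      pdist μ (fun ω => (U ω, W ω)) (x, z) * pdist μ (fun ω => (V ω, W ω)) (y, z)) :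
    cmi μ U V W = 0 := by
  rw [cmi_eq_sum_mul_log U V W hμ]
  refine sum_eq_zero fun ω _ => ?_
  rw [h]
  generalize pdist μ (fun ω => (U ω, W ω)) (U ω, W ω) * pdist μ (fun ω => (V ω, W ω)) (V ω, W ω) = p
  rcases eq_or_ne p 0 with hp | hp <;> simp [hp]

theorem sum_mul_div_pdist_le {E : Type*} [Fintype E] [DecidableEq E]
    (T : Ω → E) {f : E → ℝ} (hf : ∀ e, 0 ≤ f e) :
    ∑ ω, μ ω * (f (T ω) / pdist μ T (T ω)) ≤ ∑ e, f e := by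
  rw [← sum_pdist_mul T fun e => f e / pdist μ T e]
  refine sum_le_sum fun e _ => ?_
  rcases eq_or_ne (pdist μ T e) 0 with h0 | h0
  · simp [h0, hf e]
  · rw [mul_div_cancel₀ _ h0]

theorem sum_pdist_mul_pdist_div_le (hμ : ∀ ω, 0 ≤ μ ω) :
    ∑ a : A × B × C, pdist μ (fun ω => (U ω, W ω)) (a.1, a.2.2) *
        pdist μ (fun ω => (V ω, W ω)) a.2 / pdist μ W a.2.2 ≤ ∑ ω, μ ω := by
  calc ∑ a : A × B × C, pdist μ (fun ω => (U ω, W ω)) (a.1, a.2.2) *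
        pdist μ (fun ω => (V ω, W ω)) a.2 / pdist μ W a.2.2
      = ∑ x, ∑ ω, μ ω * (pdist μ (fun ω => (U ω, W ω)) (x, W ω) / pdist μ W (W ω)) := by
        rw [Fintype.sum_prod_type]
        refine sum_congr rfl fun x _ => ?_
        rw [← sum_pdist_mul (fun ω => (V ω, W ω))
          fun b => pdist μ (fun ω => (U ω, W ω)) (x, b.2) / pdist μ W b.2]
        exact sum_congr rfl fun b _ => by ring
    _ = ∑ ω, μ ω * (pdist μ W (W ω) / pdist μ W (W ω)) := by
        rw [sum_comm]
        refine sum_congr rfl fun ω _ => ?_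
        rw [← mul_sum, ← sum_div, sum_pdist_fst]
    _ ≤ ∑ ω, μ ω :=
        sum_le_sum fun ω _ => mul_le_of_le_one_right (hμ ω) (div_self_le_one _)

theorem cmi_nonneg (hμ : ∀ ω, 0 ≤ μ ω) : 0 ≤ cmi μ U V W := by
  -- Gibbs: `1 - 1/t ≤ log t` termwise, and the weights `p(u,w) p(v,w) / p(w)` have mass `≤ ∑ μ`
  rw [cmi_eq_sum_mul_log U V W hμ]
  have hterm : ∀ ω, μ ω - μ ω * (pdist μ (fun ω => (U ω, W ω)) (U ω, W ω) *
        pdist μ (fun ω => (V ω, W ω)) (V ω, W ω) / pdist μ W (W ω) /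
          pdist μ (fun ω => (U ω, V ω, W ω)) (U ω, V ω, W ω))
      ≤ μ ω * Real.log (pdist μ (fun ω => (U ω, V ω, W ω)) (U ω, V ω, W ω) * pdist μ W (W ω) /
        (pdist μ (fun ω => (U ω, W ω)) (U ω, W ω) *
          pdist μ (fun ω => (V ω, W ω)) (V ω, W ω))) := by
    intro ω
    rcases (hμ ω).eq_or_lt with h0 | hpos
    · simp [← h0]
    have h3 := hpos.trans_le (le_pdist_self hμ (fun ω => (U ω, V ω, W ω)) ω)
    have hW := hpos.trans_le (le_pdist_self hμ W ω)
    have hUW := hpos.trans_le (le_pdist_self hμ (fun ω => (U ω, W ω)) ω)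
    have hVW := hpos.trans_le (le_pdist_self hμ (fun ω => (V ω, W ω)) ω)
    generalize pdist μ (fun ω => (U ω, V ω, W ω)) (U ω, V ω, W ω) = p₃ at *
    generalize pdist μ W (W ω) = p₁ at *
    generalize pdist μ (fun ω => (U ω, W ω)) (U ω, W ω) = p₂ at *
    generalize pdist μ (fun ω => (V ω, W ω)) (V ω, W ω) = p₂' at *
    have hlog := Real.one_sub_inv_le_log_of_pos (x := p₃ * p₁ / (p₂ * p₂')) (by positivity)
    rw [inv_div] at hlog
    rw [← mul_one_sub, div_div, mul_comm p₁ p₃]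
    exact mul_le_mul_of_nonneg_left hlog hpos.le
  have hsum := (sum_mul_div_pdist_le (μ := μ) (fun ω => (U ω, V ω, W ω))
    (f := fun a => pdist μ (fun ω => (U ω, W ω)) (a.1, a.2.2) *
      pdist μ (fun ω => (V ω, W ω)) a.2 / pdist μ W a.2.2)
    fun a => div_nonneg (mul_nonneg (pdist_nonneg hμ _ _) (pdist_nonneg hμ _ _))
      (pdist_nonneg hμ _ _)).trans (sum_pdist_mul_pdist_div_le U V W hμ)
  calc 0 ≤ ∑ ω, (μ ω - μ ω * (pdist μ (fun ω => (U ω, W ω)) (U ω, W ω) *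
        pdist μ (fun ω => (V ω, W ω)) (V ω, W ω) / pdist μ W (W ω) /
          pdist μ (fun ω => (U ω, V ω, W ω)) (U ω, V ω, W ω))) := by
        rw [sum_sub_distrib]
        exact sub_nonneg.2 hsum
    _ ≤ _ := sum_le_sum fun ω _ => hterm ω

theorem cmi_le_cmi_of_cmi_eq_zero {D : Type*} [Fintype D] [DecidableEq D] (hμ : ∀ ω, 0 ≤ μ ω)
    (X : Ω → A) (Y : Ω → B) (Z : Ω → D) (h : cmi μ X W (fun ω => (Y ω, Z ω)) = 0) :
    cmi μ X W Z ≤ cmi μ Y W Z := by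
  -- `I(X;W|Z) + I(Y;W|X,Z)` and `I(Y;W|Z) + I(X;W|Y,Z)` both expand `I((X,Y);W|Z)`
  have e₁ : entRV μ (fun ω => (Y ω, X ω, Z ω)) = entRV μ (fun ω => (X ω, Y ω, Z ω)) :=
    entRV_comp_of_injective (g := fun p : A × B × D => (p.2.1, p.1, p.2.2))
      (by rintro ⟨⟩ ⟨⟩ h; simp_all [Prod.ext_iff])
      (fun ω => (X ω, Y ω, Z ω))
  have e₂ : entRV μ (fun ω => (W ω, X ω, Z ω)) = entRV μ (fun ω => (X ω, W ω, Z ω)) :=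
    entRV_comp_of_injective (g := fun p : A × C × D => (p.2.1, p.1, p.2.2))
      (by rintro ⟨⟩ ⟨⟩ h; simp_all [Prod.ext_iff])
      (fun ω => (X ω, W ω, Z ω))
  have e₃ : entRV μ (fun ω => (W ω, Y ω, Z ω)) = entRV μ (fun ω => (Y ω, W ω, Z ω)) :=
    entRV_comp_of_injective (g := fun p : B × C × D => (p.2.1, p.1, p.2.2))
      (by rintro ⟨⟩ ⟨⟩ h; simp_all [Prod.ext_iff])
      (fun ω => (Y ω, W ω, Z ω))
  have e₄ : entRV μ (fun ω => (Y ω, W ω, X ω, Z ω)) = entRV μ (fun ω => (X ω, W ω, Y ω, Z ω)) :=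
    entRV_comp_of_injective (g := fun p : A × C × B × D => (p.2.2.1, p.2.1, p.1, p.2.2.2))
      (by rintro ⟨⟩ ⟨⟩ h; simp_all [Prod.ext_iff])
      (fun ω => (X ω, W ω, Y ω, Z ω))
  have hY := cmi_nonneg Y W (fun ω => (X ω, Z ω)) hμ
  simp only [cmi] at h hY ⊢
  linarith

end ConditionalMutualInformation

section MarginalFamily

variable {ι D : Type*} [Fintype ι] [DecidableEq ι] [Fintype D]
  (q : Finset ι → (ι → D) → ℝ) (α : ι → ℝ) (β : ι → D → ℝ)
  (hmarg : ∀ S m c, m ∈ S → ∑ d, q S (Function.update c m d) = q (S.erase m) c)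
  (hbase : ∀ n c, q univ c * α n = q (univ.erase n) c * β n (c n))
include hmarg hbase

theorem mul_eq_erase_mul_of_marginal {S : Finset ι} {n : ι} (hn : n ∈ S) (c : ι → D) :
    q S c * α n = q (S.erase n) c * β n (c n) := by
  -- remove the coordinates outside `S` from `univ` one at a time, marginalizing `hbase`
  suffices ∀ T : Finset ι, n ∉ T → ∀ c, q Tᶜ c * α n = q (Tᶜ.erase n) c * β n (c n) by
    simpa using this Sᶜ (by simpa using hn) c
  intro T
  induction T using Finset.induction_on with
  | empty => simpa using hbase n
  | insert m T hm ih =>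
    intro hn c
    have hnm : n ≠ m := fun h => hn (h ▸ mem_insert_self m T)
    have hmT : m ∈ Tᶜ := mem_compl.2 hm
    calc q (insert m T)ᶜ c * α n = ∑ d, q Tᶜ (Function.update c m d) * α n := by
          rw [compl_insert, ← hmarg _ _ _ hmT, sum_mul]
      _ = ∑ d, q (Tᶜ.erase n) (Function.update c m d) * β n (c n) := by
          refine sum_congr rfl fun d _ => ?_
          rw [ih (fun h => hn (mem_insert_of_mem h)), Function.update_of_ne hnm]
      _ = q ((insert m T)ᶜ.erase n) c * β n (c n) := by
          rw [← sum_mul, hmarg _ _ _ (mem_erase.2 ⟨hnm.symm, hmT⟩), compl_insert,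
            erase_right_comm]

theorem mul_prod_eq_mul_prod_of_marginal (S : Finset ι) (c : ι → D) :
    q S c * ∏ n ∈ S, α n = q ∅ c * ∏ n ∈ S, β n (c n) := by
  induction S using Finset.induction_on with
  | empty => simp
  | insert m S hm ih =>
    rw [prod_insert hm, prod_insert hm, ← mul_assoc,
      mul_eq_erase_mul_of_marginal q α β hmarg hbase (mem_insert_self m S), erase_insert hm,
      mul_right_comm, ih]
    ring

end MarginalFamily

theorem mul_sum_eq_mul_sum_of_proportional {X : Type*} [Fintype X] (a b : X → ℝ) {K B : ℝ}
    (h : ∀ x, a x * K = b x * B) (hK : K = 0 → ∀ x, a x = 0) (x : X) :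
    a x * ∑ y, b y = b x * ∑ y, a y := by
  rcases eq_or_ne K 0 with h0 | h0
  · simp [hK h0]
  have hsum : (∑ y, a y) * K = (∑ y, b y) * B := by
    simp only [sum_mul, h]
  refine mul_right_cancel₀ h0 ?_
  calc (a x * ∑ y, b y) * K = (a x * K) * ∑ y, b y := by ring
    _ = b x * ((∑ y, b y) * B) := by rw [h]; ring
    _ = (b x * ∑ y, a y) * K := by rw [← hsum]; ring

section PartialJointDistribution

variable {Ω E ι D : Type*} [Fintype Ω] [DecidableEq E] [DecidableEq D]

noncomputable def pdistOn (μ : Ω → ℝ) (Z : Ω → E) (Yhat : ι → Ω → D) (S : Finset ι) (z : E)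
    (c : ι → D) : ℝ :=
  ∑ ω, if Z ω = z ∧ ∀ i ∈ S, Yhat i ω = c i then μ ω else 0

variable {μ : Ω → ℝ} (Z : Ω → E) (Yhat : ι → Ω → D)

theorem pdistOn_eq_pdist {A : Type*} [DecidableEq A] {S : Finset ι} {z : E} {c : ι → D}
    {T : Ω → A} {a : A} (h : ∀ ω, (Z ω = z ∧ ∀ i ∈ S, Yhat i ω = c i) ↔ T ω = a) :
    pdistOn μ Z Yhat S z c = pdist μ T a :=
  sum_congr rfl fun ω _ => if_congr (h ω) rfl rfl

theorem sum_pdistOn_update [DecidableEq ι] [Fintype D] {S : Finset ι} {m : ι} (hm : m ∈ S)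
    (z : E) (c : ι → D) :
    ∑ d, pdistOn μ Z Yhat S z (Function.update c m d) = pdistOn μ Z Yhat (S.erase m) z c := by
  unfold pdistOn
  rw [sum_comm]
  refine sum_congr rfl fun ω _ => ?_
  have hsplit : ∀ d, (∀ i ∈ S, Yhat i ω = Function.update c m d i) ↔
      Yhat m ω = d ∧ ∀ i ∈ S.erase m, Yhat i ω = c i := by
    intro d
    constructor
    · intro h
      refine ⟨by simpa using h m hm, fun i hi => ?_⟩
      simpa [Function.update_of_ne (ne_of_mem_erase hi)] using h i (mem_of_mem_erase hi)
    · rintro ⟨rfl, h⟩ i hi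
      by_cases him : i = m
      · simp [him]
      · simpa [Function.update_of_ne him] using h i (mem_erase.2 ⟨him, hi⟩)
  simp only [hsplit, and_left_comm (a := Z ω = z), ite_and]
  simp

end PartialJointDistribution

section Markov

variable {Ω A B C D ι : Type*} [Fintype Ω] [Fintype D] [Fintype ι]
  [DecidableEq A] [DecidableEq B] [DecidableEq C] [DecidableEq D] [DecidableEq ι]
  {μ : Ω → ℝ} (X : Ω → A) (W : Ω → B) (Y : ι → Ω → C) (Yhat : ι → Ω → D)

theorem pdist_mul_prod_eq_of_markov
    (hMarkov : ∀ (n : ι) (x : A) (w : B) (yv : ι → C) (cv : ι → D),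
      pdist μ (fun ω => (X ω, W ω, fun i => Y i ω, fun i => Yhat i ω))
          (x, w, yv, cv) * pdist μ (Y n) (yv n) =
      pdist μ (fun ω => (X ω, W ω, fun i => Y i ω,
          fun i : {i : ι // i ≠ n} => Yhat i ω)) (x, w, yv, fun i => cv i) *
        pdist μ (fun ω => (Y n ω, Yhat n ω)) (yv n, cv n))
    (x : A) (w : B) (y : ι → C) (c : ι → D) :
    pdist μ (fun ω => (X ω, W ω, fun i => Y i ω, fun i => Yhat i ω)) (x, w, y, c) *
        ∏ n, pdist μ (Y n) (y n) =
      pdist μ (fun ω => (X ω, W ω, fun i => Y i ω)) (x, w, y) *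
        ∏ n, pdist μ (fun ω => (Y n ω, Yhat n ω)) (y n, c n) := by
  have h_univ : ∀ c, pdistOn μ (fun ω => (X ω, W ω, fun i => Y i ω)) Yhat univ (x, w, y) c =
      pdist μ (fun ω => (X ω, W ω, fun i => Y i ω, fun i => Yhat i ω)) (x, w, y, c) :=
    fun c => pdistOn_eq_pdist _ _ fun ω => by simp [Prod.ext_iff, funext_iff, and_assoc]
  have h_erase : ∀ n c,
      pdistOn μ (fun ω => (X ω, W ω, fun i => Y i ω)) Yhat (univ.erase n) (x, w, y) c =
        pdist μ (fun ω => (X ω, W ω, fun i => Y i ω, fun i : {i : ι // i ≠ n} => Yhat i ω))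
          (x, w, y, fun i => c i) :=
    fun n c => pdistOn_eq_pdist _ _ fun ω => by simp [Prod.ext_iff, funext_iff, and_assoc]
  have h_empty : pdistOn μ (fun ω => (X ω, W ω, fun i => Y i ω)) Yhat ∅ (x, w, y) c =
      pdist μ (fun ω => (X ω, W ω, fun i => Y i ω)) (x, w, y) :=
    pdistOn_eq_pdist _ _ fun ω => by simp
  have := mul_prod_eq_mul_prod_of_marginal
    (fun S => pdistOn μ (fun ω => (X ω, W ω, fun i => Y i ω)) Yhat S (x, w, y))
    (fun n => pdist μ (Y n) (y n)) (fun n d => pdist μ (fun ω => (Y n ω, Yhat n ω)) (y n, d))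
    (fun S m c hm => sum_pdistOn_update _ _ hm _ c)
    (fun n c => by simp only [h_univ, h_erase, hMarkov]) univ c
  rwa [h_univ, h_empty] at this

theorem cmi_eq_zero_of_markov [Fintype A] [Fintype B] [Fintype C] (hμ : ∀ ω, 0 ≤ μ ω)
    (hMarkov : ∀ (n : ι) (x : A) (w : B) (yv : ι → C) (cv : ι → D),
      pdist μ (fun ω => (X ω, W ω, fun i => Y i ω, fun i => Yhat i ω))
          (x, w, yv, cv) * pdist μ (Y n) (yv n) =
      pdist μ (fun ω => (X ω, W ω, fun i => Y i ω,
          fun i : {i : ι // i ≠ n} => Yhat i ω)) (x, w, yv, fun i => cv i) *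
        pdist μ (fun ω => (Y n ω, Yhat n ω)) (yv n, cv n)) :
    cmi μ X (fun ω i => Yhat i ω) (fun ω => ((fun i => Y i ω), W ω)) = 0 := by
  refine cmi_eq_zero _ _ _ hμ fun x c ⟨y, w⟩ => ?_
  have h_joint : ∀ x',
      pdist μ (fun ω => (X ω, (fun i => Yhat i ω), (fun i => Y i ω), W ω)) (x', c, y, w) =
        pdist μ (fun ω => (X ω, W ω, fun i => Y i ω, fun i => Yhat i ω)) (x', w, y, c) :=
    fun x' => pdist_congr fun ω => by simp only [Prod.mk.injEq]; tauto
  have h_cond : ∀ x', pdist μ (fun ω => (X ω, (fun i => Y i ω), W ω)) (x', y, w) =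
      pdist μ (fun ω => (X ω, W ω, fun i => Y i ω)) (x', w, y) :=
    fun x' => pdist_congr fun ω => by simp only [Prod.mk.injEq]; tauto
  rw [← sum_pdist_fst X (fun ω => ((fun i => Yhat i ω), (fun i => Y i ω), W ω)),
    ← sum_pdist_fst X (fun ω => ((fun i => Y i ω), W ω))]
  simp only [h_joint, h_cond]
  refine mul_sum_eq_mul_sum_of_proportional _ _
    (pdist_mul_prod_eq_of_markov X W Y Yhat hMarkov · w y c) (fun hK x' => ?_) x
  -- if some `p(yₙ) = 0`, every joint probability with `Y = y` vanishes
  obtain ⟨n, -, hn⟩ := prod_eq_zero_iff.1 hK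
  refine le_antisymm (hn ▸ pdist_mono hμ fun ω h => ?_) (pdist_nonneg hμ _ _)
  simp only [Prod.mk.injEq] at h
  exact congrFun h.2.2.1 n

end Markov

theorem mi_le_mi_add_backhaul_general {Ω A B C D : Type*} {N : ℕ}
    [Fintype Ω] [Fintype A] [Fintype B] [Fintype C] [Fintype D]
    [DecidableEq A] [DecidableEq B] [DecidableEq C] [DecidableEq D]
    (μ : Ω → ℝ) (hμ : ∀ ω, 0 ≤ μ ω)
    (X : Ω → A) (Y₀ : Ω → B) (Y : Fin N → Ω → C) (Yhat : Fin N → Ω → D)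
    (hMarkov : ∀ (n : Fin N) (x : A) (y0 : B) (yv : Fin N → C) (cv : Fin N → D),
      pdist μ (fun ω => (X ω, Y₀ ω, fun i => Y i ω, fun i => Yhat i ω))
          (x, y0, yv, cv) * pdist μ (Y n) (yv n) =
      pdist μ (fun ω => (X ω, Y₀ ω, fun i => Y i ω,
          fun i : {i : Fin N // i ≠ n} => Yhat i ω)) (x, y0, yv, fun i => cv i) *
        pdist μ (fun ω => (Y n ω, Yhat n ω)) (yv n, cv n))
    (R : ℝ)
    (hR : cmi μ (fun ω => fun i => Y i ω) (fun ω => fun i => Yhat i ω) Y₀ ≤ R) :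
    mi μ X (fun ω => (Y₀ ω, fun i => Yhat i ω)) ≤ mi μ X Y₀ + R := by
  rw [mi_prod_eq_mi_add_cmi]
  have hdpi := cmi_le_cmi_of_cmi_eq_zero _ hμ X (fun ω i => Y i ω) Y₀
    (cmi_eq_zero_of_markov X Y₀ Y Yhat hμ hMarkov)
  linarith

/-- Upper Bound 2: if each `Ŷₙ` is conditionally independent of everything else
given `Yₙ`, and `I(Y_{1:N}; Ŷ_{1:N} | Y₀) ≤ R`, then
`I(X; Y₀, Ŷ_{1:N}) ≤ I(X; Y₀) + R`. -/
theorem mi_le_mi_add_backhaul {Ω A B C D : Type*} {N : ℕ}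
    [Fintype Ω] [Fintype A] [Fintype B] [Fintype C] [Fintype D]
    [DecidableEq A] [DecidableEq B] [DecidableEq C] [DecidableEq D]
    (μ : Ω → ℝ) (hμ : ∀ ω, 0 ≤ μ ω) (hμsum : ∑ ω, μ ω = 1)
    (X : Ω → A) (Y₀ : Ω → B) (Y : Fin N → Ω → C) (Yhat : Fin N → Ω → D)
    (hMarkov : ∀ (n : Fin N) (x : A) (y0 : B) (yv : Fin N → C) (cv : Fin N → D),
      pdist μ (fun ω => (X ω, Y₀ ω, fun i => Y i ω, fun i => Yhat i ω))
          (x, y0, yv, cv) * pdist μ (Y n) (yv n) =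
      pdist μ (fun ω => (X ω, Y₀ ω, fun i => Y i ω,
          fun i : {i : Fin N // i ≠ n} => Yhat i ω)) (x, y0, yv, fun i => cv i) *
        pdist μ (fun ω => (Y n ω, Yhat n ω)) (yv n, cv n))
    (R : ℝ)
    (hR : cmi μ (fun ω => fun i => Y i ω) (fun ω => fun i => Yhat i ω) Y₀ ≤ R) :
    mi μ X (fun ω => (Y₀ ω, fun i => Yhat i ω)) ≤ mi μ X Y₀ + R :=
  mi_le_mi_add_backhaul_general μ hμ X Y₀ Y Yhat hMarkov R hR
end

section
/- Under the conditional-independence Markov structure where each Ŷₙ depends only on Yₙ, the chain-rule sum of successive Wyner-Ziv rates telescopes: for any permutation π of {1,...,N}, Σₙ I(Y_{π(n)}; Ŷ_{π(n)} | Y₀, Ŷ_{π(1:n-1)}) = I(Y_{1:N}; Ŷ_{1:N} | Y₀). -/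
open Finset

/-! Each `Ŷ_{π n}` sees the rest of the system only through `Y_{π n}`, so in the `n`-th term
the source `Y_{π n}` may be replaced by the whole vector `Y_{1:N}` without changing the
conditional mutual information. The resulting sum is the chain rule for
`I(Y_{1:N}; Ŷ_{1:N} | Y₀)` along the order `π`: written with entropies, it telescopes. -/

section Entropy

variable {Ω : Type*} [Fintype Ω] {μ : Ω → ℝ}

lemma pdist_congr_s10 {A A' : Type*} [DecidableEq A] [DecidableEq A'] {X : Ω → A} {X' : Ω → A'}
    {a : A} {a' : A'} (h : ∀ ω, X ω = a ↔ X' ω = a') : pdist μ X a = pdist μ X' a' :=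
  Finset.sum_congr rfl fun ω _ => by simp only [h ω]

lemma pdist_apply_self_pos (hμ : ∀ ω, 0 ≤ μ ω) {ω : Ω} (hω : 0 < μ ω) {A : Type*}
    [DecidableEq A] (X : Ω → A) : 0 < pdist μ X (X ω) :=
  hω.trans_le <| by
    simpa [pdist] using Finset.single_le_sum (f := fun ω' => if X ω' = X ω then μ ω' else 0)
      (fun ω' _ => by split_ifs; exacts [hμ ω', le_rfl]) (Finset.mem_univ ω)

lemma entRV_eq_neg_sum {A : Type*} [Fintype A] [DecidableEq A] (X : Ω → A) :
    entRV μ X = -∑ ω, μ ω * Real.log (pdist μ X (X ω)) := by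
  simp only [entRV, pdist, Finset.sum_mul, ite_mul, zero_mul]
  rw [Finset.sum_comm]
  simp

lemma entRV_eq_of_eq_iff {A A' : Type*} [Fintype A] [Fintype A'] [DecidableEq A]
    [DecidableEq A'] {X : Ω → A} {X' : Ω → A'} (h : ∀ ω ω', X ω = X ω' ↔ X' ω = X' ω') :
    entRV μ X = entRV μ X' := by
  simp only [entRV_eq_neg_sum, pdist_congr_s10 fun ω' => h ω' _]

lemma pdist_comp {E E' : Type*} [Fintype E] [DecidableEq E] [DecidableEq E']
    (W : Ω → E) (φ : E → E') (w' : E') :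
    pdist μ (fun ω => φ (W ω)) w' = ∑ w with φ w = w', pdist μ W w := by
  simp only [pdist, ← Finset.sum_filter]
  rw [← Finset.sum_fiberwise_of_maps_to (g := W) (t := univ.filter (φ · = w'))
    (fun ω hω => by simp_all)]
  refine Finset.sum_congr rfl fun w hw => Finset.sum_congr ?_ fun _ _ => rfl
  ext ω
  simp only [Finset.mem_filter, Finset.mem_univ, true_and] at hw ⊢
  constructor
  · exact fun h => h.2
  · rintro rfl; exact ⟨hw, rfl⟩

lemma pdist_prod_comp {E E' D : Type*} [Fintype E] [DecidableEq E] [DecidableEq E']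
    [DecidableEq D] (W : Ω → E) (U : Ω → D) (φ : E → E') (w' : E') (u : D) :
    pdist μ (fun ω => (φ (W ω), U ω)) (w', u) =
      ∑ w with φ w = w', pdist μ (fun ω => (W ω, U ω)) (w, u) := by
  simp only [pdist, ← Finset.sum_filter]
  rw [← Finset.sum_fiberwise_of_maps_to (g := W) (t := univ.filter (φ · = w'))
    (fun ω hω => by simp_all)]
  refine Finset.sum_congr rfl fun w hw => Finset.sum_congr ?_ fun _ _ => rfl
  ext ω
  simp only [Finset.mem_filter, Finset.mem_univ, true_and, Prod.mk.injEq] at hw ⊢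
  constructor
  · rintro ⟨⟨-, hu⟩, rfl⟩; exact ⟨rfl, hu⟩
  · rintro ⟨rfl, hu⟩; exact ⟨⟨hw, hu⟩, rfl⟩

end Entropy

section MarkovChain

variable {Ω : Type*} [Fintype Ω] {μ : Ω → ℝ} {E D Z : Type*} [DecidableEq E] [DecidableEq D]
  [DecidableEq Z]

/-- `U` is conditionally independent of `W` given `ζ W`, in product form so that no
conditional probability (and no division by zero) appears. -/
def IsMarkovChain (μ : Ω → ℝ) (W : Ω → E) (ζ : E → Z) (U : Ω → D) : Prop :=
  ∀ w u, pdist μ (fun ω => (W ω, U ω)) (w, u) * pdist μ (fun ω => ζ (W ω)) (ζ w) =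
    pdist μ W w * pdist μ (fun ω => (ζ (W ω), U ω)) (ζ w, u)

lemma IsMarkovChain.comp [Fintype E] {E' : Type*} [DecidableEq E'] {W : Ω → E} {ζ : E → Z}
    {U : Ω → D} (h : IsMarkovChain μ W ζ U) (φ : E → E') (ζ' : E' → Z)
    (hζ : ∀ w, ζ' (φ w) = ζ w) : IsMarkovChain μ (fun ω => φ (W ω)) ζ' U := by
  intro w' u
  simp only [hζ]
  rw [pdist_prod_comp W U φ, pdist_comp W φ, Finset.sum_mul, Finset.sum_mul]
  refine Finset.sum_congr rfl fun w hw => ?_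
  rw [(Finset.mem_filter.mp hw).2.symm, hζ, h]

lemma IsMarkovChain.entRV_add_eq [Fintype E] [Fintype D] [Fintype Z] (hμ : ∀ ω, 0 ≤ μ ω)
    {W : Ω → E} {ζ : E → Z} {U : Ω → D} (h : IsMarkovChain μ W ζ U) :
    entRV μ (fun ω => (W ω, U ω)) + entRV μ (fun ω => ζ (W ω)) =
      entRV μ W + entRV μ (fun ω => (ζ (W ω), U ω)) := by
  simp only [entRV_eq_neg_sum, ← neg_add, ← Finset.sum_add_distrib, ← mul_add]
  congr 1
  refine Finset.sum_congr rfl fun ω _ => ?_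
  rcases (hμ ω).eq_or_lt with h0 | h0
  · simp [← h0]
  congr 1
  rw [← Real.log_mul, ← Real.log_mul, h (W ω) (U ω)]
  all_goals exact (pdist_apply_self_pos hμ h0 _).ne'

lemma cmi_eq_of_isMarkovChain [Fintype E] [Fintype D] [Fintype Z] {G : Type*} [Fintype G]
    [DecidableEq G] (hμ : ∀ ω, 0 ≤ μ ω) {V : Ω → E} {C : Ω → G} {ζ : E → Z} {U : Ω → D}
    (h : IsMarkovChain μ (fun ω => (V ω, C ω)) (fun p => ζ p.1) U) :
    cmi μ (fun ω => ζ (V ω)) U C = cmi μ V U C := by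
  have hV := h.entRV_add_eq hμ
  have hZ := (h.comp (fun p => (ζ p.1, p.2)) Prod.fst fun _ => rfl).entRV_add_eq hμ
  have hV' : entRV μ (fun ω => (V ω, U ω, C ω)) = entRV μ (fun ω => ((V ω, C ω), U ω)) :=
    entRV_eq_of_eq_iff fun _ _ => by simp only [Prod.mk.injEq]; tauto
  have hZ' : entRV μ (fun ω => (ζ (V ω), U ω, C ω)) =
      entRV μ (fun ω => ((ζ (V ω), C ω), U ω)) :=
    entRV_eq_of_eq_iff fun _ _ => by simp only [Prod.mk.injEq]; tauto
  -- both conditional entropies `H(U | V, C)` and `H(U | ζ V, C)` equal `H(U | ζ V)`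
  simp only at hV hZ
  simp only [cmi, hV', hZ']
  linarith

end MarkovChain

lemma isMarkovChain_of_pdist_mul_eq {Ω A B C D ι : Type*} [Fintype Ω] [Fintype ι]
    [DecidableEq ι] [DecidableEq A] [DecidableEq B] [DecidableEq C] [DecidableEq D]
    {μ : Ω → ℝ} (X : Ω → A) (Y₀ : Ω → B) (Y : ι → Ω → C) (Yhat : ι → Ω → D) (j : ι)
    (h : ∀ (x : A) (y0 : B) (yv : ι → C) (cv : ι → D),
      pdist μ (fun ω => (X ω, Y₀ ω, fun i => Y i ω, fun i => Yhat i ω)) (x, y0, yv, cv) *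
          pdist μ (Y j) (yv j) =
        pdist μ (fun ω => (X ω, Y₀ ω, fun i => Y i ω, fun i : {i // i ≠ j} => Yhat i ω))
            (x, y0, yv, fun i => cv i) *
          pdist μ (fun ω => (Y j ω, Yhat j ω)) (yv j, cv j)) :
    IsMarkovChain μ (fun ω => (X ω, Y₀ ω, (fun i => Y i ω), fun i : {i // i ≠ j} => Yhat i ω))
      (fun e => e.2.2.1 j) (Yhat j) := by
  rintro ⟨x, y0, yv, s⟩ u
  have hsplit (c : ι → D) :
      c = (Equiv.funSplitAt j D).symm (u, s) ↔ c j = u ∧ (fun i : {i // i ≠ j} => c i) = s := by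
    rw [Equiv.eq_symm_apply, Equiv.funSplitAt_apply, Prod.mk.injEq]
  obtain ⟨hj, hs⟩ := (hsplit _).mp rfl
  have key := h x y0 yv ((Equiv.funSplitAt j D).symm (u, s))
  rw [hj, hs] at key
  convert key using 2
  exact pdist_congr_s10 fun ω => by simp only [Prod.mk.injEq, hsplit]; tauto

section Prefix

variable {Ω D : Type*} {N : ℕ} (π : Equiv.Perm (Fin N)) (Yhat : Fin N → Ω → D)

/-- `Ŷ_{π(1:k)}`, the first `k` reconstructions in the order `π`. -/
def permPrefix (k : ℕ) (ω : Ω) : {m : Fin N // (m : ℕ) < k} → D :=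
  fun m => Yhat (π m) ω

lemma permPrefix_zero_eq (ω ω' : Ω) : permPrefix π Yhat 0 ω = permPrefix π Yhat 0 ω' :=
  funext fun m => absurd m.2 (Nat.not_lt_zero _)

lemma permPrefix_succ_eq_iff (n : Fin N) (ω ω' : Ω) :
    permPrefix π Yhat (n + 1) ω = permPrefix π Yhat (n + 1) ω' ↔
      Yhat (π n) ω = Yhat (π n) ω' ∧ permPrefix π Yhat n ω = permPrefix π Yhat n ω' := by
  simp only [permPrefix, funext_iff, Subtype.forall]
  constructor
  · exact fun h => ⟨h n (Nat.lt_succ_self _), fun m hm => h m (Nat.lt_succ_of_lt hm)⟩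
  · rintro ⟨hn, h⟩ m hm
    rcases Nat.lt_succ_iff_lt_or_eq.mp hm with hm | hm
    exacts [h m hm, Fin.ext hm ▸ hn]

lemma permPrefix_last_eq_iff (ω ω' : Ω) :
    permPrefix π Yhat N ω = permPrefix π Yhat N ω' ↔ (fun i => Yhat i ω) = fun i => Yhat i ω' := by
  simp only [permPrefix, funext_iff, Subtype.forall, Fin.is_lt, forall_const]
  exact π.surjective.forall (p := fun i => Yhat i ω = Yhat i ω') |>.symm

end Prefix

theorem sum_cmi_permPrefix {Ω E B D : Type*} {N : ℕ} [Fintype Ω] [Fintype E] [Fintype B]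
    [Fintype D] [DecidableEq E] [DecidableEq B] [DecidableEq D] (μ : Ω → ℝ) (T : Ω → E)
    (Y₀ : Ω → B) (Yhat : Fin N → Ω → D) (π : Equiv.Perm (Fin N)) :
    ∑ n : Fin N, cmi μ T (Yhat (π n)) (fun ω => (Y₀ ω, permPrefix π Yhat n ω)) =
      cmi μ T (fun ω i => Yhat i ω) Y₀ := by
  set F : ℕ → ℝ := fun k => entRV μ (fun ω => (Y₀ ω, permPrefix π Yhat k ω))
  set G : ℕ → ℝ := fun k => entRV μ (fun ω => (T ω, Y₀ ω, permPrefix π Yhat k ω))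
  have step (n : Fin N) : cmi μ T (Yhat (π n)) (fun ω => (Y₀ ω, permPrefix π Yhat n ω)) =
      (F (n + 1) - F n) + (G n - G (n + 1)) := by
    have hF : entRV μ (fun ω => (Yhat (π n) ω, Y₀ ω, permPrefix π Yhat n ω)) = F (n + 1) :=
      entRV_eq_of_eq_iff fun _ _ => by simp only [Prod.mk.injEq, permPrefix_succ_eq_iff]; tauto
    have hG : entRV μ (fun ω => (T ω, Yhat (π n) ω, Y₀ ω, permPrefix π Yhat n ω)) =
        G (n + 1) :=
      entRV_eq_of_eq_iff fun _ _ => by simp only [Prod.mk.injEq, permPrefix_succ_eq_iff]; tauto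
    rw [cmi, hF, hG]
    ring
  have hF₀ : F 0 = entRV μ Y₀ :=
    entRV_eq_of_eq_iff fun _ _ => by
      simp only [Prod.mk.injEq, eq_true (permPrefix_zero_eq π Yhat _ _), and_true]
  have hG₀ : G 0 = entRV μ (fun ω => (T ω, Y₀ ω)) :=
    entRV_eq_of_eq_iff fun _ _ => by
      simp only [Prod.mk.injEq, eq_true (permPrefix_zero_eq π Yhat _ _), and_true]
  have hF_last : F N = entRV μ (fun ω => ((fun i => Yhat i ω), Y₀ ω)) :=
    entRV_eq_of_eq_iff fun _ _ => by simp only [Prod.mk.injEq, permPrefix_last_eq_iff]; tauto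
  have hG_last : G N = entRV μ (fun ω => (T ω, (fun i => Yhat i ω), Y₀ ω)) :=
    entRV_eq_of_eq_iff fun _ _ => by simp only [Prod.mk.injEq, permPrefix_last_eq_iff]; tauto
  rw [Finset.sum_congr rfl fun n _ => step n,
    Fin.sum_univ_eq_sum_range (fun k => (F (k + 1) - F k) + (G k - G (k + 1))),
    Finset.sum_add_distrib, Finset.sum_range_sub, Finset.sum_range_sub', hF₀, hG₀, hF_last,
    hG_last, cmi]
  ring

theorem successive_wynerziv_telescopes_general {Ω A B C D : Type*} {N : ℕ}
    [Fintype Ω] [Fintype A] [Fintype B] [Fintype C] [Fintype D]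
    [DecidableEq A] [DecidableEq B] [DecidableEq C] [DecidableEq D]
    (μ : Ω → ℝ) (hμ : ∀ ω, 0 ≤ μ ω)
    (X : Ω → A) (Y₀ : Ω → B) (Y : Fin N → Ω → C) (Yhat : Fin N → Ω → D)
    (hMarkov : ∀ (n : Fin N) (x : A) (y0 : B) (yv : Fin N → C) (cv : Fin N → D),
      pdist μ (fun ω => (X ω, Y₀ ω, fun i => Y i ω, fun i => Yhat i ω))
          (x, y0, yv, cv) * pdist μ (Y n) (yv n) =
      pdist μ (fun ω => (X ω, Y₀ ω, fun i => Y i ω,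
          fun i : {i : Fin N // i ≠ n} => Yhat i ω)) (x, y0, yv, fun i => cv i) *
        pdist μ (fun ω => (Y n ω, Yhat n ω)) (yv n, cv n))
    (π : Equiv.Perm (Fin N)) :
    ∑ n : Fin N,
      cmi μ (Y (π n)) (Yhat (π n))
        (fun ω => (Y₀ ω, fun m : {m : Fin N // m < n} => Yhat (π m) ω)) =
    cmi μ (fun ω => fun i => Y i ω) (fun ω => fun i => Yhat i ω) Y₀ := by
  have hchain (n : Fin N) : IsMarkovChain μ
      (fun ω => ((fun i => Y i ω), Y₀ ω, permPrefix π Yhat n ω)) (fun p => p.1 (π n))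
      (Yhat (π n)) :=
    (isMarkovChain_of_pdist_mul_eq X Y₀ Y Yhat (π n) (hMarkov (π n))).comp
      (fun e => (e.2.2.1, e.2.1, fun m : {m : Fin N // (m : ℕ) < n} =>
        e.2.2.2 ⟨π m, π.injective.ne (Fin.ne_of_lt m.2)⟩))
      _ fun _ => rfl
  calc _ = ∑ n : Fin N, cmi μ (fun ω i => Y i ω) (Yhat (π n))
        (fun ω => (Y₀ ω, permPrefix π Yhat n ω)) :=
      Finset.sum_congr rfl fun n _ =>
        cmi_eq_of_isMarkovChain (V := fun ω i => Y i ω) (ζ := fun v => v (π n)) hμ (hchain n)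
    _ = _ := sum_cmi_permPrefix μ _ Y₀ Yhat π

/-- Successive Wyner–Ziv telescoping: under the Markov structure where each `Ŷᵢ`
depends only on `Yᵢ`, for any permutation `π` of `{1,…,N}`,
`Σₙ I(Y_{π(n)}; Ŷ_{π(n)} | Y₀, Ŷ_{π(1:n-1)}) = I(Y_{1:N}; Ŷ_{1:N} | Y₀)`. -/
theorem successive_wynerziv_telescopes {Ω A B C D : Type*} {N : ℕ}
    [Fintype Ω] [Fintype A] [Fintype B] [Fintype C] [Fintype D]
    [DecidableEq A] [DecidableEq B] [DecidableEq C] [DecidableEq D]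
    (μ : Ω → ℝ) (hμ : ∀ ω, 0 ≤ μ ω) (hμsum : ∑ ω, μ ω = 1)
    (X : Ω → A) (Y₀ : Ω → B) (Y : Fin N → Ω → C) (Yhat : Fin N → Ω → D)
    (hMarkov : ∀ (n : Fin N) (x : A) (y0 : B) (yv : Fin N → C) (cv : Fin N → D),
      pdist μ (fun ω => (X ω, Y₀ ω, fun i => Y i ω, fun i => Yhat i ω))
          (x, y0, yv, cv) * pdist μ (Y n) (yv n) =
      pdist μ (fun ω => (X ω, Y₀ ω, fun i => Y i ω,
          fun i : {i : Fin N // i ≠ n} => Yhat i ω)) (x, y0, yv, fun i => cv i) *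
        pdist μ (fun ω => (Y n ω, Yhat n ω)) (yv n, cv n))
    (π : Equiv.Perm (Fin N)) :
    ∑ n : Fin N,
      cmi μ (Y (π n)) (Yhat (π n))
        (fun ω => (Y₀ ω, fun m : {m : Fin N // m < n} => Yhat (π m) ω)) =
    cmi μ (fun ω => fun i => Y i ω) (fun ω => fun i => Yhat i ω) Y₀ :=
  successive_wynerziv_telescopes_general μ hμ X Y₀ Y Yhat hMarkov π
end

section
/- Let Q be an n×n positive semidefinite Hermitian matrix, H₀ an m₀×n matrix, H₁ an m₁×n matrix, σ² > 0, and A a m₁×m₁ positive semidefinite Hermitian matrix. Define R := H₁·(I + (1/σ²)·Q·H₀†·H₀)^{-1}·Q·H₁† + σ²·I. Then log det(I + (1/σ²)·Q·H₀†·H₀ + Q·H₁†·(A·σ² + I)^{-1}·A·H₁) = log det(I + (1/σ²)·Q·H₀†·H₀) + log det(I + A·R) - log det(I + σ²·A). -/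
/-!
Write `S = I + σ⁻²QH₀ᴴH₀` and `T = I + σ²A`. The generalized matrix determinant lemma gives
`det (S + QH₁ᴴT⁻¹AH₁) · det T = det S · det (T + AH₁S⁻¹QH₁ᴴ) = det S · det (I + AR)`.
The determinants `det S`, `det T` and `det (I + AR)` are all of the form `det (I + PP')` with
`P, P'` positive semidefinite (for `R` because `S⁻¹Q` is), hence positive reals, so the identity
survives taking real logarithms.
-/

open Matrix ComplexOrder

namespace Matrix

section Det

variable {α m n : Type*} [CommRing α] [Fintype m] [DecidableEq m] [Fintype n] [DecidableEq n]

theorem det_add_mul_inv_mul_mul_det {S : Matrix m m α} {T : Matrix n n α} (U : Matrix m n α)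
    (V : Matrix n m α) (hS : IsUnit S.det) (hT : IsUnit T.det) :
    (S + U * T⁻¹ * V).det * T.det = S.det * (T + V * S⁻¹ * U).det := by
  have hST : (S + U * T⁻¹ * V).det = S.det * (1 + (T⁻¹ * V) * (S⁻¹ * U)).det := by
    rw [Matrix.mul_assoc U, det_add_mul _ _ hS, Matrix.mul_assoc]
  have hTS : (T + V * S⁻¹ * U).det = T.det * (1 + (S⁻¹ * U) * (T⁻¹ * V)).det := by
    rw [Matrix.mul_assoc V, det_add_mul _ _ hT, Matrix.mul_assoc]
  rw [hST, hTS, det_one_add_mul_comm]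
  ring

end Det

namespace PosSemidef

variable {𝕜 n : Type*} [RCLike 𝕜] [Fintype n] [DecidableEq n]

open scoped MatrixOrder in
theorem det_one_add_mul_pos {P Q : Matrix n n 𝕜} (hP : P.PosSemidef) (hQ : Q.PosSemidef) :
    0 < (1 + P * Q).det := by
  set B := CFC.sqrt P
  have hB : Bᴴ = B := (nonneg_iff_posSemidef.mp (CFC.sqrt_nonneg P)).isHermitian
  have hPB : P = B * B := (CFC.sqrt_mul_sqrt_self P (nonneg_iff_posSemidef.mpr hP)).symm
  rw [hPB, Matrix.mul_assoc, det_one_add_mul_comm, Matrix.mul_assoc]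
  simpa only [hB, Matrix.mul_assoc] using
    (PosDef.one.add_posSemidef (hQ.mul_mul_conjTranspose_same B)).det_pos

theorem inv_one_add_mul_mul {Q G : Matrix n n 𝕜} (hQ : Q.PosSemidef) (hG : G.PosSemidef) :
    ((1 + Q * G)⁻¹ * Q).PosSemidef := by
  set S := 1 + Q * G
  have hS : IsUnit S.det := (hQ.det_one_add_mul_pos hG).ne'.isUnit
  have hSQ : S * Q = Q + Qᴴ * G * Q := by
    simp only [S, hQ.isHermitian.eq, Matrix.add_mul, Matrix.one_mul]
  have hSQ_comm : S * Q = Q * Sᴴ := by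
    simp only [S, conjTranspose_add, conjTranspose_one, conjTranspose_mul, hQ.isHermitian.eq,
      hG.isHermitian.eq, Matrix.add_mul, Matrix.mul_add, Matrix.one_mul, Matrix.mul_one,
      Matrix.mul_assoc]
  -- `S Q = Q Sᴴ` exhibits `S⁻¹ Q` as a congruence of the positive semidefinite `S Q`.
  have hcongr : S⁻¹ * Q = S⁻¹ * (S * Q) * S⁻¹ᴴ := by
    rw [conjTranspose_nonsing_inv, hSQ_comm, Matrix.mul_assoc, Matrix.mul_assoc,
      Matrix.mul_nonsing_inv _ (by rwa [det_conjTranspose, isUnit_star]), Matrix.mul_one]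
  rw [hcongr]
  exact (hSQ ▸ hQ.add (hG.conjTranspose_mul_mul_same Q)).mul_mul_conjTranspose_same S⁻¹

end PosSemidef

end Matrix

theorem Complex.log_re_eq_of_mul_eq_mul {a s r t : ℂ} (hs : 0 < s) (hr : 0 < r) (ht : 0 < t)
    (h : a * t = s * r) : Real.log a.re = Real.log s.re + Real.log r.re - Real.log t.re := by
  have exists_pos_ofReal {z : ℂ} (hz : 0 < z) : ∃ x : ℝ, 0 < x ∧ (x : ℂ) = z :=
    RCLike.pos_iff_exists_ofReal.mp hz
  obtain ⟨x, hx, rfl⟩ := exists_pos_ofReal hs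
  obtain ⟨y, hy, rfl⟩ := exists_pos_ofReal hr
  obtain ⟨z, hz, rfl⟩ := exists_pos_ofReal ht
  have ha : a = ((x * y / z : ℝ) : ℂ) := by
    rw [ofReal_div, ofReal_mul, ← h, mul_div_cancel_right₀ _ (ofReal_ne_zero.mpr hz.ne')]
  rw [ha, ofReal_re, ofReal_re, ofReal_re, ofReal_re, Real.log_div (by positivity) hz.ne',
    Real.log_mul hx.ne' hy.ne']

/-- Log-determinant expansion for the two-base-station Lagrangian:
`log det(I + σ⁻²QH₀ᴴH₀ + QH₁ᴴ(Aσ²+I)⁻¹AH₁)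
  = log det(I + σ⁻²QH₀ᴴH₀) + log det(I + A·R) - log det(I + σ²A)`,
where `R = H₁(I + σ⁻²QH₀ᴴH₀)⁻¹QH₁ᴴ + σ²I`. -/
theorem logdet_expansion_two_bs {k m₀ m₁ : ℕ}
    (Q : Matrix (Fin k) (Fin k) ℂ) (hQ : Q.PosSemidef)
    (H₀ : Matrix (Fin m₀) (Fin k) ℂ) (H₁ : Matrix (Fin m₁) (Fin k) ℂ)
    (σ2 : ℝ) (hσ : 0 < σ2)
    (A : Matrix (Fin m₁) (Fin m₁) ℂ) (hA : A.PosSemidef)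
    (R : Matrix (Fin m₁) (Fin m₁) ℂ)
    (hR : R = H₁ * (1 + ((σ2 : ℂ))⁻¹ • (Q * H₀ᴴ * H₀))⁻¹ * Q * H₁ᴴ + (σ2 : ℂ) • 1) :
    Real.log ((1 + ((σ2 : ℂ))⁻¹ • (Q * H₀ᴴ * H₀)
        + Q * H₁ᴴ * ((σ2 : ℂ) • A + 1)⁻¹ * A * H₁).det.re) =
      Real.log ((1 + ((σ2 : ℂ))⁻¹ • (Q * H₀ᴴ * H₀)).det.re)
        + Real.log ((1 + A * R).det.re)
        - Real.log ((1 + (σ2 : ℂ) • A).det.re) := by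
  have hσ' : (0 : ℂ) < σ2 := Complex.zero_lt_real.mpr hσ
  set G := ((σ2 : ℂ))⁻¹ • (H₀ᴴ * H₀)
  have hG : G.PosSemidef := (posSemidef_conjTranspose_mul_self H₀).smul (inv_pos.mpr hσ').le
  have hS : 1 + ((σ2 : ℂ))⁻¹ • (Q * H₀ᴴ * H₀) = 1 + Q * G := by
    rw [Matrix.mul_smul, Matrix.mul_assoc]
  have hT : (σ2 : ℂ) • A + 1 = 1 + (σ2 : ℂ) • A := add_comm _ _
  have hSdet : 0 < (1 + Q * G).det := hQ.det_one_add_mul_pos hG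
  have hTdet : 0 < (1 + (σ2 : ℂ) • A).det := (PosDef.one.add_posSemidef (hA.smul hσ'.le)).det_pos
  have hRpsd : R.PosSemidef := by
    rw [hR, hS, Matrix.mul_assoc H₁]
    exact ((hQ.inv_one_add_mul_mul hG).mul_mul_conjTranspose_same H₁).add
      (PosSemidef.one.smul hσ'.le)
  have hAR : (1 + (σ2 : ℂ) • A) + A * H₁ * (1 + Q * G)⁻¹ * (Q * H₁ᴴ) = 1 + A * R := by
    rw [hR, hS]
    simp only [Matrix.mul_add, Matrix.mul_smul, Matrix.mul_one, Matrix.mul_assoc]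
    abel
  have hdet := det_add_mul_inv_mul_mul_det (Q * H₁ᴴ) (A * H₁) hSdet.ne'.isUnit hTdet.ne'.isUnit
  rw [hAR] at hdet
  rw [hS, hT, Complex.log_re_eq_of_mul_eq_mul hSdet (hA.det_one_add_mul_pos hRpsd) hTdet]
  simpa only [Matrix.mul_assoc] using hdet
end
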